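/- Let (Ω, ℱ, μ) be a probability space, let S and T be standard Borel spaces, and let C : Ω → S and X : Ω → T be measurable. Let Z_n : Ω → ℝ be a sequence of random variables, let g_n : T × S → ℝ and h_n : S → ℝ be measurable, and set V_n := g_n(X, C) and W_n := h_n(C). Suppose that (i) for every x ∈ ℝ, for almost every (t, c) with respect to the law of (X, C), P(Z_n ≤ x | (X, C) = (t, c)) → Φ(x); (ii) for every x ∈ ℝ, for almost every c with respect to the law of C, P(V_n ≤ x | C = c) → Φ(x); and (iii) for every x ∈ ℝ, μ{W_n ≤ x} → Φ(x). Then Z_n + V_n + W_n converges in distribution to a normal random variable with mean 0 and variance 3; equivalently, for every x ∈ ℝ, μ{Z_n + V_n + W_n ≤ x} → Φ(x/√3) as n → ∞. -/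

import Mathlib

open MeasureTheory ProbabilityTheory Filter

/-- The cumulative distribution function of the standard normal distribution. -/
noncomputable def stdNormalCDF (x : ℝ) : ℝ :=
  ((gaussianReal 0 1) (Set.Iic x)).toReal

/-!
Write `V = g(X, C)`, `W = h(C)` and `γ` for the standard Gaussian. By Pólya's theorem the
conditional CDFs converge uniformly, so after disintegrating with respect to `(X, C)` the law of
`Z + V + W` is within the expected Kolmogorov distance of `law(V + W) ∗ γ`, an error that tends to
`0` by dominated convergence. Disintegrating with respect to `C` in the same way, `law(V + W)` is
uniformly close to `law(W) ∗ γ`, and convolving with `γ` preserves uniform closeness of CDFs. Finally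
the CDF of `law(W) ∗ (γ ∗ γ)` at `x` is `∫ P(W ≤ x - z) d(γ ∗ γ)(z)`, which tends to
`(γ ∗ γ ∗ γ)(-∞, x] = Φ(x / √3)` by dominated convergence.
-/

open Set
open scoped ENNReal NNReal Topology

lemma abs_sub_le_of_mem_Icc_of_mem_Icc {s t u v u' v' : ℝ} (hs : s ∈ Icc u v)
    (ht : t ∈ Icc u' v') : |s - t| ≤ max |u - u'| |v - v'| + (v' - u') := by
  obtain ⟨hus, hsv⟩ := hs
  obtain ⟨hut, htv⟩ := ht
  rw [abs_le]
  constructor <;>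
  linarith [le_abs_self (u - u'), neg_abs_le (u - u'), le_abs_self (v - v'), neg_abs_le (v - v'),
    le_max_left |u - u'| |v - v'|, le_max_right |u - u'| |v - v'|]

namespace ProbabilityTheory

lemma norm_cdf_le_one (ν : Measure ℝ) (x : ℝ) : ‖cdf ν x‖ ≤ 1 := by
  rw [Real.norm_eq_abs, abs_of_nonneg (cdf_nonneg ν x)]
  exact cdf_le_one ν x

lemma continuous_cdf (μ : Measure ℝ) [IsProbabilityMeasure μ] [NullSingletonClass μ] :
    Continuous (cdf μ) := by
  refine continuous_iff_continuousAt.2 fun x ↦ ?_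
  rw [(monotone_cdf μ).continuousAt_iff_leftLim_eq_rightLim, StieltjesFunction.rightLim_eq]
  have h := (cdf μ).measure_singleton x
  rw [measure_cdf, measure_singleton, eq_comm, ENNReal.ofReal_eq_zero, sub_nonpos] at h
  exact le_antisymm ((monotone_cdf μ).leftLim_le le_rfl) h

lemma continuous_cdf_gaussianReal (m : ℝ) {v : ℝ≥0} (hv : v ≠ 0) :
    Continuous (cdf (gaussianReal m v)) :=
  have : NullSingletonClass (gaussianReal m v) :=
    ⟨fun x ↦ gaussianReal_absolutelyContinuous m hv (Real.volume_singleton (a := x))⟩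
  continuous_cdf _

lemma exists_rat_cdf_lt (ρ : Measure ℝ) {δ : ℝ} (hδ : 0 < δ) : ∃ A : ℚ, cdf ρ A < δ := by
  obtain ⟨M, hM⟩ := eventually_atBot.1 ((tendsto_cdf_atBot ρ).eventually (gt_mem_nhds hδ))
  obtain ⟨A, hA⟩ := exists_rat_lt M
  exact ⟨A, hM A hA.le⟩

lemma exists_rat_one_sub_lt_cdf (ρ : Measure ℝ) {δ : ℝ} (hδ : 0 < δ) :
    ∃ B : ℚ, 1 - δ < cdf ρ B := by
  obtain ⟨M, hM⟩ := eventually_atTop.1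
    ((tendsto_cdf_atTop ρ).eventually (lt_mem_nhds (sub_lt_self 1 hδ)))
  obtain ⟨B, hB⟩ := exists_rat_gt M
  exact ⟨B, hM B hB.le⟩

lemma exists_rat_mem_Ioo_cdf_sub_lt {ρ : Measure ℝ} (hρ : Continuous (cdf ρ)) (y : ℝ) {δ : ℝ}
    (hδ : 0 < δ) : ∃ a b : ℚ, y ∈ Ioo (a : ℝ) b ∧ cdf ρ b - cdf ρ a < δ := by
  obtain ⟨η, hη, hG⟩ := Metric.continuousAt_iff.1 hρ.continuousAt (δ / 2) (half_pos hδ)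
  obtain ⟨a, ha⟩ := exists_rat_btwn (sub_lt_self y hη)
  obtain ⟨b, hb⟩ := exists_rat_btwn (lt_add_of_pos_right y hη)
  have hGa := hG (show dist (a : ℝ) y < η by rw [Real.dist_eq, abs_lt]; constructor <;> linarith)
  have hGb := hG (show dist (b : ℝ) y < η by rw [Real.dist_eq, abs_lt]; constructor <;> linarith)
  rw [Real.dist_eq, abs_lt] at hGa hGb
  exact ⟨a, b, ⟨ha.2, hb.1⟩, by linarith⟩

/-- Pólya's theorem. -/
theorem tendstoUniformly_cdf_of_tendsto_rat {ι : Type*} {l : Filter ι} {ν : ι → Measure ℝ} {ρ : Measure ℝ}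
    (hρ : Continuous (cdf ρ)) (h : ∀ q : ℚ, Tendsto (fun n ↦ cdf (ν n) q) l (𝓝 (cdf ρ q))) :
    TendstoUniformly (fun n ↦ cdf (ν n)) (cdf ρ) l := by
  rw [Metric.tendstoUniformly_iff]
  intro ε hε
  set δ := ε / 3 with hδ_def
  have hδ : 0 < δ := by positivity
  have hclose (q : ℚ) : ∀ᶠ n in l, |cdf (ν n) q - cdf ρ q| < δ := by
    simpa only [Real.dist_eq] using Metric.tendsto_nhds.1 (h q) δ hδ
  obtain ⟨A, hA⟩ := exists_rat_cdf_lt ρ hδ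
  obtain ⟨B, hB⟩ := exists_rat_one_sub_lt_cdf ρ hδ
  -- finitely many rational intervals cover `[A, B]`, and `cdf ρ` varies by less than `δ` on each
  choose a b hyab hab using fun y ↦ exists_rat_mem_Ioo_cdf_sub_lt hρ y hδ
  obtain ⟨t, ht⟩ := isCompact_Icc.elim_finite_subcover (fun y ↦ Ioo (a y : ℝ) (b y))
    (fun _ ↦ isOpen_Ioo) (fun y _ ↦ mem_iUnion.2 ⟨y, hyab y⟩)
  filter_upwards [hclose A, hclose B, (t.eventually_all).2 fun y _ ↦ hclose (a y),
    (t.eventually_all).2 fun y _ ↦ hclose (b y)] with n hnA hnB hna hnb y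
  have hF := monotone_cdf (ν n)
  have hG := monotone_cdf ρ
  have hF01 (z : ℝ) : cdf (ν n) z ∈ Icc 0 1 := ⟨cdf_nonneg _ z, cdf_le_one _ z⟩
  have hG01 (z : ℝ) : cdf ρ z ∈ Icc 0 1 := ⟨cdf_nonneg _ z, cdf_le_one _ z⟩
  rw [dist_comm, Real.dist_eq]
  rcases lt_or_ge y A with hyA | hAy
  · have := abs_sub_le_of_mem_Icc_of_mem_Icc ⟨(hF01 y).1, hF hyA.le⟩ ⟨(hG01 y).1, hG hyA.le⟩
    simp only [sub_self, abs_zero] at this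
    linarith [max_le hδ.le hnA.le]
  rcases lt_or_ge (B : ℝ) y with hBy | hyB
  · have := abs_sub_le_of_mem_Icc_of_mem_Icc ⟨hF hBy.le, (hF01 y).2⟩ ⟨hG hBy.le, (hG01 y).2⟩
    simp only [sub_self, abs_zero] at this
    linarith [max_le hnB.le hδ.le]
  obtain ⟨z, hz, hyz⟩ := mem_iUnion₂.1 (ht ⟨hAy, hyB⟩)
  have := abs_sub_le_of_mem_Icc_of_mem_Icc ⟨hF hyz.1.le, hF hyz.2.le⟩ ⟨hG hyz.1.le, hG hyz.2.le⟩
  linarith [max_le (hna z hz).le (hnb z hz).le, hab z]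

noncomputable def kolmogorovDist (ν ρ : Measure ℝ) : ℝ≥0∞ :=
  ⨆ x : ℝ, edist (cdf ν x) (cdf ρ x)

lemma kolmogorovDist_le_one (ν ρ : Measure ℝ) : kolmogorovDist ν ρ ≤ 1 :=
  iSup_le fun x ↦ by
    rw [edist_dist, ENNReal.ofReal_le_one]
    exact Real.dist_le_of_mem_Icc_01 ⟨cdf_nonneg _ x, cdf_le_one _ x⟩
      ⟨cdf_nonneg _ x, cdf_le_one _ x⟩

lemma abs_cdf_sub_le_kolmogorovDist (ν ρ : Measure ℝ) (x : ℝ) :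
    |cdf ν x - cdf ρ x| ≤ (kolmogorovDist ν ρ).toReal := by
  rw [← Real.dist_eq, dist_edist]
  exact ENNReal.toReal_mono ((kolmogorovDist_le_one ν ρ).trans_lt ENNReal.one_lt_top).ne
    (le_iSup (fun x ↦ edist (cdf ν x) (cdf ρ x)) x)

lemma kolmogorovDist_eq_iSup_rat (ν ρ : Measure ℝ) :
    kolmogorovDist ν ρ = ⨆ q : ℚ, edist (cdf ν q) (cdf ρ q) := by
  refine le_antisymm (iSup_le fun x ↦ ?_) (iSup_le fun q ↦ le_iSup_of_le (q : ℝ) le_rfl)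
  obtain ⟨u, -, hxu, hu⟩ := Real.exists_seq_rat_strictAnti_tendsto x
  have hu' : Tendsto (fun k ↦ (u k : ℝ)) atTop (𝓝[≥] x) :=
    tendsto_nhdsWithin_iff.2 ⟨hu, Eventually.of_forall fun k ↦ (hxu k).le⟩
  refine le_of_tendsto' (((cdf ν).right_continuous' x).tendsto.comp hu' |>.edist
    (((cdf ρ).right_continuous' x).tendsto.comp hu')) fun k ↦ ?_
  exact le_iSup (fun q : ℚ ↦ edist (cdf ν q) (cdf ρ q)) (u k)

lemma measurable_kolmogorovDist {β : Type*} [MeasurableSpace β] (κ : Kernel β ℝ)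
    [IsMarkovKernel κ] (ρ : Measure ℝ) : Measurable fun b ↦ kolmogorovDist (κ b) ρ := by
  simp_rw [kolmogorovDist_eq_iSup_rat, cdf_eq_real]
  exact .iSup fun q ↦ (κ.measurable_coe measurableSet_Iic).ennreal_toReal.edist measurable_const

lemma tendsto_kolmogorovDist_of_tendstoUniformly {ι : Type*} {l : Filter ι}
    {ν : ι → Measure ℝ} {ρ : Measure ℝ} (h : TendstoUniformly (fun n ↦ cdf (ν n)) (cdf ρ) l) :
    Tendsto (fun n ↦ kolmogorovDist (ν n) ρ) l (𝓝 0) := by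
  refine ENNReal.tendsto_nhds_zero.2 fun ε hε ↦ ?_
  filter_upwards [EMetric.tendstoUniformly_iff.1 h ε hε] with n hn
  exact iSup_le fun x ↦ (edist_comm (cdf ρ x) _ ▸ hn x).le

lemma cdf_conv (ρ ν : Measure ℝ) [IsProbabilityMeasure ρ] [IsProbabilityMeasure ν] (x : ℝ) :
    cdf (ρ ∗ ν) x = ∫ a, cdf ν (x - a) ∂ρ := by
  have hν : Measurable fun a ↦ ν (Iic (x - a)) :=
    Antitone.measurable fun a a' h ↦ measure_mono (Iic_subset_Iic.2 (by linarith))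
  have h : (ρ ∗ ν) (Iic x) = ∫⁻ a, ν (Iic (x - a)) ∂ρ := by
    rw [← lintegral_indicator_one measurableSet_Iic,
      Measure.lintegral_conv (measurable_one.indicator measurableSet_Iic)]
    congr with a
    rw [← lintegral_indicator_one measurableSet_Iic]
    congr with b
    simp only [indicator, mem_Iic, le_sub_iff_add_le', Pi.one_apply]
  simp_rw [cdf_eq_real, measureReal_def, h]
  exact (integral_toReal hν.aemeasurable (ae_of_all _ fun _ ↦ measure_lt_top _ _)).symm

lemma cdf_conv' (ρ ν : Measure ℝ) [IsProbabilityMeasure ρ] [IsProbabilityMeasure ν] (x : ℝ) :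
    cdf (ρ ∗ ν) x = ∫ b, cdf ρ (x - b) ∂ν := by
  rw [Measure.conv_comm, cdf_conv]

lemma cdf_map {α : Type*} [MeasurableSpace α] (μ : Measure α) [IsProbabilityMeasure μ]
    {u : α → ℝ} (hu : Measurable u) (x : ℝ) :
    cdf (μ.map u) x = (μ {a | u a ≤ x}).toReal := by
  have := Measure.isProbabilityMeasure_map (μ := μ) hu.aemeasurable
  rw [cdf_eq_real, map_measureReal_apply hu measurableSet_Iic]
  rfl

lemma cdf_map_conv {α : Type*} [MeasurableSpace α] (μ : Measure α) [IsProbabilityMeasure μ]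
    {u : α → ℝ} (hu : Measurable u) (ν : Measure ℝ) [IsProbabilityMeasure ν] (x : ℝ) :
    cdf (μ.map u ∗ ν) x = ∫ a, cdf ν (x - u a) ∂μ := by
  have := Measure.isProbabilityMeasure_map (μ := μ) hu.aemeasurable
  rw [cdf_conv, integral_map hu.aemeasurable]
  exact ((monotone_cdf ν).measurable.comp (measurable_const.sub measurable_id)).aestronglyMeasurable

lemma abs_cdf_conv_sub_cdf_conv_le {σ σ' : Measure ℝ} [IsProbabilityMeasure σ]
    [IsProbabilityMeasure σ'] (ν : Measure ℝ) [IsProbabilityMeasure ν] {ε : ℝ}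
    (h : ∀ y, |cdf σ y - cdf σ' y| ≤ ε) (x : ℝ) :
    |cdf (σ ∗ ν) x - cdf (σ' ∗ ν) x| ≤ ε := by
  have hint (τ : Measure ℝ) : Integrable (fun b ↦ cdf τ (x - b)) ν :=
    .of_bound ((monotone_cdf τ).measurable.comp
      (measurable_const.sub measurable_id)).aestronglyMeasurable 1
      (ae_of_all _ fun b ↦ norm_cdf_le_one τ _)
  rw [cdf_conv', cdf_conv', ← integral_sub (hint σ) (hint σ')]
  calc |∫ b, cdf σ (x - b) - cdf σ' (x - b) ∂ν| ≤ ∫ _, ε ∂ν :=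
        Real.norm_eq_abs _ ▸ norm_integral_le_of_norm_le (integrable_const ε)
          (ae_of_all _ fun b ↦ h (x - b))
    _ = ε := by simp

lemma tendsto_cdf_conv {σ : ℕ → Measure ℝ} [∀ n, IsProbabilityMeasure (σ n)] {σ' : Measure ℝ}
    [IsProbabilityMeasure σ'] (ν : Measure ℝ) [IsProbabilityMeasure ν]
    (h : ∀ y, Tendsto (fun n ↦ cdf (σ n) y) atTop (𝓝 (cdf σ' y))) (x : ℝ) :
    Tendsto (fun n ↦ cdf (σ n ∗ ν) x) atTop (𝓝 (cdf (σ' ∗ ν) x)) := by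
  simp_rw [cdf_conv']
  exact tendsto_integral_of_dominated_convergence (fun _ ↦ 1)
    (fun n ↦ ((monotone_cdf (σ n)).measurable.comp
      (measurable_const.sub measurable_id)).aestronglyMeasurable) (integrable_const 1)
    (fun n ↦ ae_of_all _ fun b ↦ norm_cdf_le_one _ _) (ae_of_all _ fun b ↦ h (x - b))

section Conditional

variable {α β : Type*} [MeasurableSpace α] [MeasurableSpace β] {μ : Measure α}
  [IsProbabilityMeasure μ] {W : α → β}

lemma cdf_map_add_eq_integral_cdf_condDistrib (hW : Measurable W) {Y : α → ℝ}
    (hY : Measurable Y) {f : β → ℝ} (hf : Measurable f) (x : ℝ) :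
    cdf (μ.map fun a ↦ Y a + f (W a)) x
      = ∫ b, cdf (condDistrib Y W μ b) (x - f b) ∂(μ.map W) := by
  have hA : MeasurableSet {p : β × ℝ | p.2 ≤ x - f p.1} :=
    measurableSet_le measurable_snd (measurable_const.sub (hf.comp measurable_fst))
  have h : μ {a | Y a + f (W a) ≤ x} = ∫⁻ b, condDistrib Y W μ b (Iic (x - f b)) ∂(μ.map W) :=
    calc μ {a | Y a + f (W a) ≤ x} = (μ.map fun a ↦ (W a, Y a)) {p | p.2 ≤ x - f p.1} := by
          rw [Measure.map_apply (hW.prodMk hY) hA]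
          congr 1 with a
          simp only [mem_ofPred_eq, mem_preimage, le_sub_iff_add_le]
      _ = ((μ.map W) ⊗ₘ condDistrib Y W μ) {p | p.2 ≤ x - f p.1} := by
          rw [compProd_map_condDistrib hY.aemeasurable]
      _ = ∫⁻ b, condDistrib Y W μ b (Iic (x - f b)) ∂(μ.map W) := Measure.compProd_apply hA
  simp_rw [cdf_map μ (u := fun a ↦ Y a + f (W a)) (hY.add (hf.comp hW)), cdf_eq_real,
    measureReal_def, h]
  exact (integral_toReal (f := fun b ↦ condDistrib Y W μ b (Iic (x - f b)))
    (Kernel.measurable_kernel_prodMk_left hA).aemeasurable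
    (ae_of_all _ fun b ↦ measure_lt_top _ _)).symm

theorem exists_tendsto_zero_abs_cdf_map_add_sub_cdf_conv_le (hW : Measurable W)
    {Y : ℕ → α → ℝ} (hY : ∀ n, Measurable (Y n)) {ρ : Measure ℝ} [IsProbabilityMeasure ρ]
    (hρ : Continuous (cdf ρ))
    (h : ∀ x, ∀ᵐ b ∂(μ.map W),
      Tendsto (fun n ↦ cdf (condDistrib (Y n) W μ b) x) atTop (𝓝 (cdf ρ x))) :
    ∃ ε : ℕ → ℝ, Tendsto ε atTop (𝓝 0) ∧ ∀ n {f : β → ℝ}, Measurable f → ∀ x,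
      |cdf (μ.map fun a ↦ Y n a + f (W a)) x - cdf (μ.map (fun a ↦ f (W a)) ∗ ρ) x| ≤ ε n := by
  have := Measure.isProbabilityMeasure_map (μ := μ) hW.aemeasurable
  set d : ℕ → β → ℝ := fun n b ↦ (kolmogorovDist (condDistrib (Y n) W μ b) ρ).toReal
  have hd_meas (n : ℕ) : Measurable (d n) := (measurable_kolmogorovDist _ ρ).ennreal_toReal
  have hd_le (n : ℕ) (b : β) : ‖d n b‖ ≤ 1 := by
    rw [Real.norm_eq_abs, abs_of_nonneg ENNReal.toReal_nonneg]
    exact ENNReal.toReal_le_of_le_ofReal zero_le_one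
      ((kolmogorovDist_le_one _ _).trans ENNReal.ofReal_one.ge)
  refine ⟨fun n ↦ ∫ b, d n b ∂(μ.map W), ?_, fun n f hf x ↦ ?_⟩
  · have hlim : ∀ᵐ b ∂(μ.map W), Tendsto (fun n ↦ d n b) atTop (𝓝 0) := by
      filter_upwards [ae_all_iff.2 fun q : ℚ ↦ h q] with b hb
      simpa [d, Function.comp_def] using (ENNReal.tendsto_toReal ENNReal.zero_ne_top).comp
        (tendsto_kolmogorovDist_of_tendstoUniformly (tendstoUniformly_cdf_of_tendsto_rat hρ hb))
    simpa using tendsto_integral_of_dominated_convergence (fun _ ↦ 1)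
      (fun n ↦ (hd_meas n).aestronglyMeasurable) (integrable_const 1)
      (fun n ↦ ae_of_all _ (hd_le n)) hlim
  have hA : MeasurableSet {p : β × ℝ | p.2 ≤ x - f p.1} :=
    measurableSet_le measurable_snd (measurable_const.sub (hf.comp measurable_fst))
  have hκ : Integrable (fun b ↦ cdf (condDistrib (Y n) W μ b) (x - f b)) (μ.map W) := by
    refine .of_bound ?_ 1 (ae_of_all _ fun b ↦ norm_cdf_le_one _ _)
    simp_rw [cdf_eq_real, measureReal_def]
    exact (Kernel.measurable_kernel_prodMk_left hA).ennreal_toReal.aestronglyMeasurable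
  have hρf : Measurable fun b ↦ cdf ρ (x - f b) :=
    (monotone_cdf ρ).measurable.comp (measurable_const.sub hf)
  rw [cdf_map_add_eq_integral_cdf_condDistrib hW (hY n) hf,
    cdf_map_conv μ (u := fun a ↦ f (W a)) (hf.comp hW),
    ← integral_map hW.aemeasurable hρf.aestronglyMeasurable, ← integral_sub hκ
      (.of_bound hρf.aestronglyMeasurable 1 (ae_of_all _ fun b ↦ norm_cdf_le_one _ _))]
  exact Real.norm_eq_abs _ ▸ norm_integral_le_of_norm_le ((integrable_const 1).mono'
    (hd_meas n).aestronglyMeasurable (ae_of_all _ (hd_le n)))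
    (ae_of_all _ fun b ↦ abs_cdf_sub_le_kolmogorovDist _ _ _)

end Conditional

end ProbabilityTheory

lemma stdNormalCDF_eq_cdf (x : ℝ) : stdNormalCDF x = cdf (gaussianReal 0 1) x :=
  (cdf_eq_real _ x).symm

lemma cdf_gaussianReal_zero_eq_stdNormalCDF {v : ℝ≥0} (hv : v ≠ 0) (x : ℝ) :
    cdf (gaussianReal 0 v) x = stdNormalCDF (x / √v) := by
  have hv' : 0 < √(v : ℝ) := Real.sqrt_pos.2 (NNReal.coe_pos.2 (pos_iff_ne_zero.2 hv))
  have hmap : (gaussianReal 0 1).map (√(v : ℝ) * ·) = gaussianReal 0 v := by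
    rw [gaussianReal_map_const_mul, mul_zero, mul_one]
    exact congrArg _ (NNReal.eq (Real.sq_sqrt v.coe_nonneg))
  rw [← hmap, cdf_map _ (measurable_const_mul _), stdNormalCDF]
  congr 2 with y
  simp only [mem_ofPred_eq, mem_Iic, le_div_iff₀ hv', mul_comm y]

theorem tendsto_cdf_map_add_add {Ω S T : Type*} [MeasurableSpace Ω] [MeasurableSpace S]
    [MeasurableSpace T] {μ : Measure Ω} [IsProbabilityMeasure μ] {ρ : Measure ℝ}
    [IsProbabilityMeasure ρ] (hρ : Continuous (cdf ρ)) {C : Ω → S} (hC : Measurable C)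
    {X : Ω → T} (hX : Measurable X) {Z : ℕ → Ω → ℝ} (hZ : ∀ n, Measurable (Z n))
    {g : ℕ → T × S → ℝ} (hg : ∀ n, Measurable (g n)) {h : ℕ → S → ℝ}
    (hh : ∀ n, Measurable (h n))
    (hcondZ : ∀ x, ∀ᵐ p ∂(μ.map fun ω ↦ (X ω, C ω)),
      Tendsto (fun n ↦ cdf (condDistrib (Z n) (fun ω ↦ (X ω, C ω)) μ p) x) atTop (𝓝 (cdf ρ x)))
    (hcondV : ∀ x, ∀ᵐ c ∂(μ.map C),
      Tendsto (fun n ↦ cdf (condDistrib (fun ω ↦ g n (X ω, C ω)) C μ c) x) atTop (𝓝 (cdf ρ x)))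
    (hW : ∀ x, Tendsto (fun n ↦ cdf (μ.map fun ω ↦ h n (C ω)) x) atTop (𝓝 (cdf ρ x))) (x : ℝ) :
    Tendsto (fun n ↦ cdf (μ.map fun ω ↦ Z n ω + g n (X ω, C ω) + h n (C ω)) x) atTop
      (𝓝 (cdf (ρ ∗ ρ ∗ ρ) x)) := by
  have hXC : Measurable fun ω ↦ (X ω, C ω) := hX.prodMk hC
  have hσ (n : ℕ) : IsProbabilityMeasure (μ.map fun ω ↦ h n (C ω)) :=
    Measure.isProbabilityMeasure_map ((hh n).comp hC).aemeasurable
  have hτ (n : ℕ) : IsProbabilityMeasure (μ.map fun ω ↦ g n (X ω, C ω) + h n (C ω)) :=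
    Measure.isProbabilityMeasure_map (((hg n).comp hXC).add ((hh n).comp hC)).aemeasurable
  obtain ⟨εZ, hεZ, hZclose⟩ := exists_tendsto_zero_abs_cdf_map_add_sub_cdf_conv_le hXC hZ hρ hcondZ
  obtain ⟨εV, hεV, hVclose⟩ := exists_tendsto_zero_abs_cdf_map_add_sub_cdf_conv_le hC
    (Y := fun n ω ↦ g n (X ω, C ω)) (fun n ↦ (hg n).comp hXC) hρ hcondV
  refine (tendsto_cdf_conv (ρ ∗ ρ) hW x).congr_dist
    (squeeze_zero (fun n ↦ dist_nonneg) (fun n ↦ ?_) (by simpa using hεZ.add hεV))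
  rw [dist_comm, Real.dist_eq]
  simp_rw [add_assoc]
  exact (abs_sub_le _ (cdf (μ.map (fun ω ↦ g n (X ω, C ω) + h n (C ω)) ∗ ρ) x) _).trans
    (add_le_add (hZclose n (f := fun p ↦ g n p + h n p.2) (by fun_prop) x)
      (by rw [← Measure.conv_assoc]; exact abs_cdf_conv_sub_cdf_conv_le ρ (hVclose n (hh n)) x))

theorem stmt_10_general {Ω S T : Type} [MeasurableSpace Ω]
    [MeasurableSpace S]
    [MeasurableSpace T]
    (μ : Measure Ω) [IsProbabilityMeasure μ]
    (C : Ω → S) (hC : Measurable C)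
    (X : Ω → T) (hX : Measurable X)
    (Z : ℕ → Ω → ℝ) (hZ : ∀ n, Measurable (Z n))
    (g : ℕ → T × S → ℝ) (hg : ∀ n, Measurable (g n))
    (h : ℕ → S → ℝ) (hh : ∀ n, Measurable (h n))
    (hcondZ : ∀ x : ℝ, ∀ᵐ p ∂(μ.map fun ω => (X ω, C ω)),
      Tendsto
        (fun n => ((condDistrib (Z n) (fun ω => (X ω, C ω)) μ) p (Set.Iic x)).toReal)
        atTop (nhds (stdNormalCDF x)))
    (hcondV : ∀ x : ℝ, ∀ᵐ c ∂(μ.map C),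
      Tendsto
        (fun n => ((condDistrib (fun ω => g n (X ω, C ω)) C μ) c (Set.Iic x)).toReal)
        atTop (nhds (stdNormalCDF x)))
    (hW : ∀ x : ℝ, Tendsto (fun n => (μ {ω | h n (C ω) ≤ x}).toReal) atTop
        (nhds (stdNormalCDF x))) :
    ∀ x : ℝ, Tendsto
      (fun n => (μ {ω | Z n ω + g n (X ω, C ω) + h n (C ω) ≤ x}).toReal) atTop
      (nhds (stdNormalCDF (x / Real.sqrt 3))) := by
  intro x
  have hγ3 : gaussianReal 0 1 ∗ gaussianReal 0 1 ∗ gaussianReal 0 1 = gaussianReal 0 3 := by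
    rw [gaussianReal_conv_gaussianReal, gaussianReal_conv_gaussianReal]
    norm_num
  have hlim := tendsto_cdf_map_add_add (continuous_cdf_gaussianReal 0 one_ne_zero) hC hX hZ hg hh
    (fun y ↦ by simpa only [cdf_eq_real, measureReal_def, stdNormalCDF_eq_cdf] using hcondZ y)
    (fun y ↦ by simpa only [cdf_eq_real, measureReal_def, stdNormalCDF_eq_cdf] using hcondV y)
    (fun y ↦ by
      simpa only [fun n ↦ cdf_map μ (u := fun ω ↦ h n (C ω)) ((hh n).comp hC) y,
        stdNormalCDF_eq_cdf] using hW y) x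
  simpa only [hγ3, cdf_gaussianReal_zero_eq_stdNormalCDF three_ne_zero, NNReal.coe_ofNat,
    fun n ↦ cdf_map μ (u := fun ω ↦ Z n ω + g n (X ω, C ω) + h n (C ω)) (by fun_prop) x] using hlim

theorem stmt_10 {Ω S T : Type} [MeasurableSpace Ω]
    [MeasurableSpace S] [StandardBorelSpace S]
    [MeasurableSpace T] [StandardBorelSpace T]
    (μ : Measure Ω) [IsProbabilityMeasure μ]
    (C : Ω → S) (hC : Measurable C)
    (X : Ω → T) (hX : Measurable X)
    (Z : ℕ → Ω → ℝ) (hZ : ∀ n, Measurable (Z n))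
    (g : ℕ → T × S → ℝ) (hg : ∀ n, Measurable (g n))
    (h : ℕ → S → ℝ) (hh : ∀ n, Measurable (h n))
    (hcondZ : ∀ x : ℝ, ∀ᵐ p ∂(μ.map fun ω => (X ω, C ω)),
      Tendsto
        (fun n => ((condDistrib (Z n) (fun ω => (X ω, C ω)) μ) p (Set.Iic x)).toReal)
        atTop (nhds (stdNormalCDF x)))
    (hcondV : ∀ x : ℝ, ∀ᵐ c ∂(μ.map C),
      Tendsto
        (fun n => ((condDistrib (fun ω => g n (X ω, C ω)) C μ) c (Set.Iic x)).toReal)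
        atTop (nhds (stdNormalCDF x)))
    (hW : ∀ x : ℝ, Tendsto (fun n => (μ {ω | h n (C ω) ≤ x}).toReal) atTop
        (nhds (stdNormalCDF x))) :
    ∀ x : ℝ, Tendsto
      (fun n => (μ {ω | Z n ω + g n (X ω, C ω) + h n (C ω) ≤ x}).toReal) atTop
      (nhds (stdNormalCDF (x / Real.sqrt 3))) :=
  stmt_10_general μ C hC X hX Z hZ g hg h hh hcondZ hcondV hW
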